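/- Euler's identities: for |q|<1 and |z|<1, ∑_{n≥0} z^n/(q;q)_n = 1/(z;q)_∞, and for all z, ∑_{n≥0} q^{n(n-1)/2} z^n/(q;q)_n = (-z;q)_∞. -/

import Mathlib

/-!
Write `S_c(w) = ∑ c n * w ^ n`. For `c n = 1 / (q;q)_n` the recursion
`c (n+1) (1 - q^(n+1)) = c n` gives `S_c(w) - S_c(q w) = w S_c(w)`, i.e.
`(1 - w) S_c(w) = S_c(q w)`; for `c n = q^(n(n-1)/2) / (q;q)_n` it gives
`S_c(w) - S_c(q w) = w S_c(q w)`, i.e. `S_c(w) = (1 + w) S_c(q w)`. Iterating `N` times expresses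
`S_c(z)` through `S_c(q^N z)` and the partial product `(∓z;q)_N`; as `N → ∞`,
`S_c(q^N z) → c 0 = 1` by dominated convergence.
-/

/-- Finite q-Pochhammer symbol `(a;q)_n`. -/
noncomputable def qPoch (a q : ℂ) (n : ℕ) : ℂ := ∏ k ∈ Finset.range n, (1 - a * q ^ k)

/-- Infinite q-Pochhammer symbol `(a;q)_∞`. -/
noncomputable def qPochInf (a q : ℂ) : ℂ := ∏' k : ℕ, (1 - a * q ^ k)

open Filter Finset Topology

theorem prod_range_mul_eq_prod_range_mul {M : Type*} [CommMonoid M] {a b u : ℕ → M}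
    (h : ∀ k, a k * u k = b k * u (k + 1)) (N : ℕ) :
    (∏ k ∈ range N, a k) * u 0 = (∏ k ∈ range N, b k) * u N := by
  induction N with
  | zero => simp
  | succ N ih =>
    rw [prod_range_succ, prod_range_succ, mul_right_comm, ih, mul_assoc, mul_comm (u N), h,
      mul_assoc]

section NormedField

variable {𝕜 : Type*} [NormedField 𝕜]

theorem summable_norm_of_succ_eq_mul {f ρ : ℕ → 𝕜} {l : 𝕜} (hl : ‖l‖ < 1)
    (hρ : Tendsto ρ atTop (𝓝 l)) (hf : ∀ n, f (n + 1) = ρ n * f n) :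
    Summable fun n => ‖f n‖ := by
  have hr : ‖l‖ < (1 + ‖l‖) / 2 := by linarith
  refine summable_of_ratio_norm_eventually_le (r := (1 + ‖l‖) / 2) (by linarith) ?_
  filter_upwards [hρ.norm.eventually (gt_mem_nhds hr)] with n hn
  rw [norm_norm, norm_norm, hf, norm_mul]
  exact mul_le_mul_of_nonneg_right hn.le (norm_nonneg _)

theorem tendsto_tsum_mul_pow_mul_pow [CompleteSpace 𝕜] {c : ℕ → 𝕜} {q z : 𝕜}
    (hq : ‖q‖ < 1) (hc : Summable fun n => ‖c n * z ^ n‖) :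
    Tendsto (fun N => ∑' n, c n * (q ^ N * z) ^ n) atTop (𝓝 (c 0)) := by
  have hlim : ∀ n, Tendsto (fun N => c n * (q ^ N * z) ^ n) atTop (𝓝 (c n * (0 * z) ^ n)) :=
    fun n => ((tendsto_pow_atTop_nhds_zero_of_norm_lt_one hq).mul_const z).pow n |>.const_mul _
  have hsum_zero : ∑' n, c n * (0 * z) ^ n = c 0 := by
    rw [tsum_eq_single 0 fun n hn => by simp [hn]]
    simp
  have hbound : ∀ N n, ‖c n * (q ^ N * z) ^ n‖ ≤ ‖c n * z ^ n‖ := fun N n => by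
    simp only [norm_mul, norm_pow, mul_pow]
    gcongr
    exact mul_le_of_le_one_left (by positivity)
      (pow_le_one₀ (by positivity) (pow_le_one₀ (norm_nonneg q) hq.le))
  simpa only [hsum_zero] using tendsto_tsum_of_dominated_convergence hc hlim (.of_forall hbound)

theorem tsum_mul_pow_sub_tsum_mul_pow_mul {c d : ℕ → 𝕜} {q w : 𝕜}
    (hw : Summable fun n => c n * w ^ n) (hqw : Summable fun n => c n * (q * w) ^ n)
    (hcd : ∀ n, c (n + 1) * (1 - q ^ (n + 1)) = d n) :
    ∑' n, c n * w ^ n - ∑' n, c n * (q * w) ^ n = w * ∑' n, d n * w ^ n := by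
  rw [← hw.tsum_sub hqw, (hw.sub hqw).tsum_eq_zero_add, ← tsum_mul_left]
  simp only [pow_zero, mul_one, sub_self, zero_add, mul_pow, ← hcd]
  congr 1 with n
  ring

end NormedField

section QPochhammer

variable {q : ℂ}

theorem qPoch_zero (a q : ℂ) : qPoch a q 0 = 1 :=
  prod_range_zero _

theorem qPoch_succ (a q : ℂ) (n : ℕ) : qPoch a q (n + 1) = qPoch a q n * (1 - a * q ^ n) :=
  prod_range_succ _ _

theorem qPoch_self_succ (q : ℂ) (n : ℕ) :
    qPoch q q (n + 1) = qPoch q q n * (1 - q ^ (n + 1)) := by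
  rw [qPoch_succ, ← pow_succ']

theorem tendsto_qPoch_qPochInf (a : ℂ) (hq : ‖q‖ < 1) :
    Tendsto (qPoch a q) atTop (𝓝 (qPochInf a q)) := by
  have hsum : Summable fun k => ‖-(a * q ^ k)‖ := by
    simpa using (summable_geometric_of_lt_one (norm_nonneg q) hq).mul_left ‖a‖
  have := (multipliable_one_add_of_summable hsum).hasProd.tendsto_prod_nat
  simp only [← sub_eq_add_neg] at this
  exact this

theorem one_sub_pow_succ_ne_zero (hq : ‖q‖ < 1) (n : ℕ) : 1 - q ^ (n + 1) ≠ 0 := by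
  refine sub_ne_zero.mpr fun h => ?_
  have : ‖q ^ (n + 1)‖ < 1 := by
    rw [norm_pow]
    exact pow_lt_one₀ (norm_nonneg q) hq n.succ_ne_zero
  simp [← h] at this

theorem tendsto_inv_one_sub_pow_succ (hq : ‖q‖ < 1) :
    Tendsto (fun n : ℕ => (1 - q ^ (n + 1))⁻¹) atTop (𝓝 1) := by
  simpa using (((tendsto_pow_atTop_nhds_zero_of_norm_lt_one hq).comp
    (tendsto_add_atTop_nat 1)).const_sub 1).inv₀ (by simp)

theorem norm_pow_mul_lt_one (hq : ‖q‖ < 1) {z : ℂ} (hz : ‖z‖ < 1) (k : ℕ) :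
    ‖q ^ k * z‖ < 1 := by
  rw [norm_mul, norm_pow]
  exact mul_lt_one_of_nonneg_of_lt_one_right (pow_le_one₀ (norm_nonneg q) hq.le)
    (norm_nonneg z) hz

theorem inv_qPoch_self_succ (q : ℂ) (n : ℕ) :
    (qPoch q q (n + 1))⁻¹ = (1 - q ^ (n + 1))⁻¹ * (qPoch q q n)⁻¹ := by
  rw [qPoch_self_succ, mul_inv, mul_comm]

theorem summable_norm_inv_qPoch_mul_pow (hq : ‖q‖ < 1) {w : ℂ} (hw : ‖w‖ < 1) :
    Summable fun n => ‖(qPoch q q n)⁻¹ * w ^ n‖ :=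
  summable_norm_of_succ_eq_mul hw (by simpa using (tendsto_inv_one_sub_pow_succ hq).mul_const w)
    fun n => by rw [inv_qPoch_self_succ, pow_succ]; ring

theorem one_sub_mul_tsum_inv_qPoch_mul_pow (hq : ‖q‖ < 1) {w : ℂ} (hw : ‖w‖ < 1) :
    (1 - w) * ∑' n, (qPoch q q n)⁻¹ * w ^ n = ∑' n, (qPoch q q n)⁻¹ * (q * w) ^ n := by
  have hqw : ‖q * w‖ < 1 := by simpa using norm_pow_mul_lt_one hq hw 1
  have := tsum_mul_pow_sub_tsum_mul_pow_mul (d := fun n => (qPoch q q n)⁻¹)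
    (summable_norm_inv_qPoch_mul_pow hq hw).of_norm
    (summable_norm_inv_qPoch_mul_pow hq hqw).of_norm fun n => by
      rw [inv_qPoch_self_succ, mul_comm, ← mul_assoc,
        mul_inv_cancel₀ (one_sub_pow_succ_ne_zero hq n), one_mul]
  linear_combination this

theorem tsum_div_qPoch_mul_qPochInf (hq : ‖q‖ < 1) {z : ℂ} (hz : ‖z‖ < 1) :
    (∑' n, z ^ n / qPoch q q n) * qPochInf z q = 1 := by
  set S : ℂ → ℂ := fun w => ∑' n, (qPoch q q n)⁻¹ * w ^ n
  have hstep (k : ℕ) : (1 - z * q ^ k) * S (q ^ k * z) = 1 * S (q ^ (k + 1) * z) := by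
    rw [one_mul, mul_comm z, pow_succ', mul_assoc]
    exact one_sub_mul_tsum_inv_qPoch_mul_pow hq (norm_pow_mul_lt_one hq hz k)
  have hiter (N : ℕ) : qPoch z q N * S z = S (q ^ N * z) := by
    have := prod_range_mul_eq_prod_range_mul hstep N
    simp only [pow_zero, one_mul, prod_const_one] at this
    exact this
  have hlim : Tendsto (fun N => qPoch z q N * S z) atTop (𝓝 1) := by
    simpa only [hiter, qPoch_zero, inv_one] using
      tendsto_tsum_mul_pow_mul_pow hq (summable_norm_inv_qPoch_mul_pow hq hz)
  have hS : ∑' n, z ^ n / qPoch q q n = S z := by simp only [S, div_eq_inv_mul]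
  rw [hS, mul_comm]
  exact tendsto_nhds_unique ((tendsto_qPoch_qPochInf z hq).mul_const (S z)) hlim

theorem pow_triangle_div_qPoch_succ (q : ℂ) (n : ℕ) :
    q ^ ((n + 1) * (n + 1 - 1) / 2) / qPoch q q (n + 1)
      = q ^ n * (1 - q ^ (n + 1))⁻¹ * (q ^ (n * (n - 1) / 2) / qPoch q q n) := by
  rw [Nat.triangle_succ, pow_add, qPoch_self_succ, div_eq_mul_inv, div_eq_mul_inv, mul_inv]
  ring

theorem summable_norm_pow_triangle_div_qPoch_mul_pow (hq : ‖q‖ < 1) (w : ℂ) :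
    Summable fun n => ‖q ^ (n * (n - 1) / 2) / qPoch q q n * w ^ n‖ := by
  have hρ : Tendsto (fun n : ℕ => q ^ n * (1 - q ^ (n + 1))⁻¹ * w) atTop (𝓝 0) := by
    simpa using ((tendsto_pow_atTop_nhds_zero_of_norm_lt_one hq).mul
      (tendsto_inv_one_sub_pow_succ hq)).mul_const w
  refine summable_norm_of_succ_eq_mul (by simp) hρ fun n => ?_
  rw [pow_triangle_div_qPoch_succ, pow_succ]
  ring

theorem tsum_pow_triangle_div_qPoch_mul_pow_eq (hq : ‖q‖ < 1) (w : ℂ) :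
    ∑' n, q ^ (n * (n - 1) / 2) / qPoch q q n * w ^ n
      = (1 + w) * ∑' n, q ^ (n * (n - 1) / 2) / qPoch q q n * (q * w) ^ n := by
  have := tsum_mul_pow_sub_tsum_mul_pow_mul
    (d := fun n => q ^ n * (q ^ (n * (n - 1) / 2) / qPoch q q n))
    (summable_norm_pow_triangle_div_qPoch_mul_pow hq w).of_norm
    (summable_norm_pow_triangle_div_qPoch_mul_pow hq (q * w)).of_norm fun n => by
      rw [pow_triangle_div_qPoch_succ, mul_right_comm, mul_assoc (q ^ n),
        inv_mul_cancel₀ (one_sub_pow_succ_ne_zero hq n), mul_one]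
  rw [show ∑' n, q ^ n * (q ^ (n * (n - 1) / 2) / qPoch q q n) * w ^ n
      = ∑' n, q ^ (n * (n - 1) / 2) / qPoch q q n * (q * w) ^ n from tsum_congr fun n => by ring]
    at this
  linear_combination this

theorem tsum_pow_triangle_mul_pow_div_qPoch (hq : ‖q‖ < 1) (z : ℂ) :
    ∑' n, q ^ (n * (n - 1) / 2) * z ^ n / qPoch q q n = qPochInf (-z) q := by
  set S : ℂ → ℂ := fun w => ∑' n, q ^ (n * (n - 1) / 2) / qPoch q q n * w ^ n
  have hstep (k : ℕ) : 1 * S (q ^ k * z) = (1 - -z * q ^ k) * S (q ^ (k + 1) * z) := by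
    rw [one_mul, neg_mul, sub_neg_eq_add, mul_comm z, pow_succ', mul_assoc]
    exact tsum_pow_triangle_div_qPoch_mul_pow_eq hq _
  have hiter (N : ℕ) : S z = qPoch (-z) q N * S (q ^ N * z) := by
    have := prod_range_mul_eq_prod_range_mul hstep N
    simp only [pow_zero, one_mul, prod_const_one] at this
    exact this
  have hlim :
      Tendsto (fun N => qPoch (-z) q N * S (q ^ N * z)) atTop (𝓝 (qPochInf (-z) q)) := by
    simpa [qPoch_zero] using (tendsto_qPoch_qPochInf (-z) hq).mul
      (tendsto_tsum_mul_pow_mul_pow hq (summable_norm_pow_triangle_div_qPoch_mul_pow hq z))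
  have hS : ∑' n, q ^ (n * (n - 1) / 2) * z ^ n / qPoch q q n = S z := by
    simp only [S, mul_div_right_comm]
  rw [hS]
  exact tendsto_nhds_unique (by simpa only [← hiter] using tendsto_const_nhds) hlim

end QPochhammer

/-- Euler's q-exponential identities. -/
theorem euler_identities (q : ℂ) (hq : ‖q‖ < 1) :
    (∀ z : ℂ, ‖z‖ < 1 →
        ∑' n : ℕ, z ^ n / qPoch q q n = 1 / qPochInf z q) ∧
    (∀ z : ℂ, ∑' n : ℕ, q ^ (n * (n - 1) / 2) * z ^ n / qPoch q q n = qPochInf (-z) q) :=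
  ⟨fun _ hz => eq_one_div_of_mul_eq_one_left (tsum_div_qPoch_mul_qPochInf hq hz),
    tsum_pow_triangle_mul_pow_div_qPoch hq⟩
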